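/- arXiv:2603.11916 — 2 statements merged into one kernel-verified Lean document; each statement's English description precedes it below -/
import Mathlib

section
/- The aggregated within-sample repulsion over all N circular windows satisfies ∑_{j=1}^N ∑_{i<k, i,k ∈ s_j} ‖x_{u_i} − x_{u_k}‖ = ∑_{1 ≤ r < v ≤ N} w(t_{rv}) ‖x_{u_r} − x_{u_v}‖, where t_{rv} = min(|r−v|, N−|r−v|) and w(t) = n − t if t < n and 0 otherwise. Assume n ≤ N/2. -/
open Finset

/-- Circular separation `t_{rv} = min(|r − v|, N − |r − v|)` of positions `r, v`. -/
def circSep (N : ℕ) (r v : Fin N) : ℕ :=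
  min ((r.val : ℤ) - v.val).natAbs (N - ((r.val : ℤ) - v.val).natAbs)

/-! Both summands are symmetric in the pair and vanish on the diagonal, so doubling each side
turns it into a sum over all ordered pairs. Shifting the `j`-th window back by `j` shows that
the pair `(r, v)` is then counted once for every pair of offsets `a, b < n` with
`b - a ≡ v - r (mod N)`. Writing `d = (v - r) mod N`, these are `(a, a + d)` with `a + d < n`
and `(a, a + d - N)` with `N ≤ a + d`; when `2 n ≤ N` at most one of the two families is
nonempty, and together they number `n - min d (N - d) = n - t_{rv}`. -/

theorem sum_sum_eq_two_nsmul_sum_sum_ite_lt {α M : Type*} [LinearOrder α] [AddCommMonoid M]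
    (s : Finset α) (f : α → α → M) (hsym : ∀ a b, f a b = f b a) (hdiag : ∀ a, f a a = 0) :
    ∑ a ∈ s, ∑ b ∈ s, f a b = 2 • ∑ a ∈ s, ∑ b ∈ s, if a < b then f a b else 0 := by
  have hsplit : ∀ a b,
      f a b = (if a < b then f a b else 0) + (if b < a then f b a else 0) := by
    intro a b
    rcases lt_trichotomy a b with h | rfl | h
    · simp [h, h.not_gt]
    · simp [hdiag]
    · simp [h, h.not_gt, hsym a b]
  calc ∑ a ∈ s, ∑ b ∈ s, f a b
      = ∑ a ∈ s, ∑ b ∈ s, ((if a < b then f a b else 0) + (if b < a then f b a else 0)) :=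
        sum_congr rfl fun a _ => sum_congr rfl fun b _ => hsplit a b
    _ = 2 • ∑ a ∈ s, ∑ b ∈ s, if a < b then f a b else 0 := by
        simp only [sum_add_distrib, two_nsmul]
        rw [sum_comm (s := s) (t := s) (f := fun a b => if b < a then f b a else 0)]

theorem sum_sum_sum_add_eq_sum_sum_card_nsmul {G ι M : Type*} [AddCommGroup G] [Fintype G]
    [DecidableEq G] [AddCommMonoid M] (s : Finset ι) (φ : ι → G) (f : G → G → M) :
    ∑ j, ∑ a ∈ s, ∑ b ∈ s, f (j + φ a) (j + φ b) =
      ∑ r, ∑ v, #{ab ∈ s ×ˢ s | φ ab.2 - φ ab.1 = v - r} • f r v := by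
  have hshift : ∀ a b, ∑ j, f (j + φ a) (j + φ b) = ∑ r, f r (r + (φ b - φ a)) := fun a b =>
    Fintype.sum_equiv (Equiv.addRight (φ a)) _ _ fun j => by simp [add_assoc]
  calc ∑ j, ∑ a ∈ s, ∑ b ∈ s, f (j + φ a) (j + φ b)
      = ∑ j, ∑ ab ∈ s ×ˢ s, f (j + φ ab.1) (j + φ ab.2) := by simp only [sum_product]
    _ = ∑ ab ∈ s ×ˢ s, ∑ r, f r (r + (φ ab.2 - φ ab.1)) := by
        rw [sum_comm]; exact sum_congr rfl fun ab _ => hshift _ _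
    _ = ∑ r, ∑ ab ∈ s ×ˢ s, f r (r + (φ ab.2 - φ ab.1)) := sum_comm
    _ = ∑ r, ∑ v, #{ab ∈ s ×ˢ s | φ ab.2 - φ ab.1 = v - r} • f r v := by
        refine sum_congr rfl fun r _ => ?_
        simp only [← sum_const, sum_filter]
        rw [sum_comm]
        refine sum_congr rfl fun ab _ => ?_
        simp only [eq_sub_iff_add_eq, add_comm _ r, sum_ite_eq, mem_univ, if_true]

open Fin.NatCast in
theorem Fin.natCast_sub_natCast_eq_iff {N a b : ℕ} [NeZero N] (hb : b < N) (d : Fin N) :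
    (b : Fin N) - (a : Fin N) = d ↔ b = (a + d) % N := by
  rw [sub_eq_iff_eq_add, Fin.ext_iff, Fin.val_add, Fin.val_natCast, Fin.val_natCast,
    Nat.mod_eq_of_lt hb, Nat.add_mod_mod, add_comm d.val]

theorem card_range_filter_add_mod_lt {N n d : ℕ} (h2 : 2 * n ≤ N) (hd : d < N) :
    #{a ∈ range n | (a + d) % N < n} = n - min d (N - d) := by
  have hmod : ∀ a < n, (a + d) % N < n ↔ a < n - d ∨ N - d ≤ a := by
    intro a ha
    rw [Nat.add_mod_eq_ite, Nat.mod_eq_of_lt (by omega : a < N), Nat.mod_eq_of_lt hd]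
    split_ifs <;> omega
  rcases lt_or_ge d n with hdn | hdn
  · have : {a ∈ range n | (a + d) % N < n} = range (n - d) := by
      ext a
      have hma := hmod a
      simp only [mem_filter, mem_range]
      omega
    rw [this, card_range]; omega
  · have : {a ∈ range n | (a + d) % N < n} = Ico (N - d) n := by
      ext a
      have hma := hmod a
      simp only [mem_filter, mem_range, mem_Ico]
      omega
    rw [this, Nat.card_Ico]; omega

open Fin.NatCast in
theorem card_filter_natCast_sub_eq {N n : ℕ} [NeZero N] (h2 : 2 * n ≤ N) (d : Fin N) :
    #{ab ∈ range n ×ˢ range n | (ab.2 : Fin N) - ab.1 = d} = n - min d.val (N - d.val) := by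
  rw [← card_range_filter_add_mod_lt h2 d.isLt, card_filter, card_filter, sum_product]
  refine sum_congr rfl fun a _ => ?_
  have hlt : ∀ b ∈ range n, b < N := fun b hb => by rw [mem_range] at hb; omega
  rw [sum_congr rfl fun b hb =>
    if_congr (Fin.natCast_sub_natCast_eq_iff (a := a) (hlt b hb) d) rfl rfl, sum_ite_eq']
  simp only [mem_range]

theorem circSep_comm (N : ℕ) (r v : Fin N) : circSep N r v = circSep N v r := by
  unfold circSep; omega

theorem circSep_eq_min_sub (N : ℕ) (r v : Fin N) :
    circSep N r v = min (v - r).val (N - (v - r).val) := by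
  unfold circSep
  rcases le_or_gt r v with h | h
  · rw [Fin.sub_val_of_le h]; omega
  · rw [Fin.coe_sub_iff_lt.2 h]; omega

open Fin.NatCast in
theorem aggregated_repulsion_identity_general {p : ℕ} (N n : ℕ) [NeZero N]
    (h2 : 2 * n ≤ N)
    (x : Fin N → EuclideanSpace ℝ (Fin p)) (u : Equiv.Perm (Fin N)) :
    ∑ j : Fin N, ∑ a ∈ Finset.range n, ∑ b ∈ Finset.range n,
        (if a < b then ‖x (u (j + (a : Fin N))) - x (u (j + (b : Fin N)))‖ else 0) =
      ∑ r : Fin N, ∑ v : Fin N,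
        (if r.val < v.val then
          ((n - circSep N r v : ℕ) : ℝ) * ‖x (u r) - x (u v)‖ else 0) := by
  set g : Fin N → Fin N → ℝ := fun r v => ‖x (u r) - x (u v)‖
  have hsym : ∀ r v, g r v = g v r := fun r v => norm_sub_rev _ _
  have hdiag : ∀ r, g r r = 0 := fun r => by simp [g]
  apply nsmul_right_injective two_ne_zero
  calc 2 • ∑ j, ∑ a ∈ range n, ∑ b ∈ range n, (if a < b then g (j + a) (j + b) else 0)
      = ∑ j, ∑ a ∈ range n, ∑ b ∈ range n, g (j + a) (j + b) := by
        rw [smul_sum]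
        exact sum_congr rfl fun j _ =>
          (sum_sum_eq_two_nsmul_sum_sum_ite_lt _ _ (fun a b => hsym _ _) fun a => hdiag _).symm
    _ = ∑ r, ∑ v, ((n - circSep N r v : ℕ) : ℝ) * g r v := by
        simp only [sum_sum_sum_add_eq_sum_sum_card_nsmul, card_filter_natCast_sub_eq h2,
          ← circSep_eq_min_sub, nsmul_eq_mul]
    _ = 2 • ∑ r, ∑ v, (if r < v then ((n - circSep N r v : ℕ) : ℝ) * g r v else 0) :=
        sum_sum_eq_two_nsmul_sum_sum_ite_lt _ _ (fun r v => by rw [circSep_comm, hsym])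
          fun r => by simp [hdiag]

open Fin.NatCast in
/-- The aggregated within-sample repulsion over all `N` circular windows
satisfies
`∑_{j=1}^N ∑_{i<k, i,k∈s_j} ‖x_{u_i} − x_{u_k}‖ = ∑_{1≤r<v≤N} w(t_{rv}) ‖x_{u_r} − x_{u_v}‖`,
where `t_{rv}` is the circular separation and `w(t) = n − t` if `t < n`, `0` otherwise
(`max(n − t, 0)`, i.e. truncated subtraction).  Assumes `n ≤ N/2`. -/
theorem aggregated_repulsion_identity {p : ℕ} (N n : ℕ) [NeZero N]
    (hn : 0 < n) (h2 : 2 * n ≤ N)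
    (x : Fin N → EuclideanSpace ℝ (Fin p)) (u : Equiv.Perm (Fin N)) :
    ∑ j : Fin N, ∑ a ∈ Finset.range n, ∑ b ∈ Finset.range n,
        (if a < b then ‖x (u (j + (a : Fin N))) - x (u (j + (b : Fin N)))‖ else 0) =
      ∑ r : Fin N, ∑ v : Fin N,
        (if r.val < v.val then
          ((n - circSep N r v : ℕ) : ℝ) * ‖x (u r) - x (u v)‖ else 0) :=
  aggregated_repulsion_identity_general N n h2 x u
end

section
/- The expected energy distance of the circular design decomposes as Ē(u; n) = (1/N)∑_{i∈U} Φ_i − (2/(N n²)) R(u), where R(u) = ∑_{j=1}^N ∑_{i<k, i,k∈s_j} ‖x_{u_i} − x_{u_k}‖. Consequently, minimizing Ē(u;n) over permutations u is equivalent to maximizing R(u). -/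
open Finset MeasureTheory
open Fin.NatCast

noncomputable section

/-- The empirical (uniform) probability measure of the points `{x_i : i ∈ s}`. -/
def empMeasure {p N : ℕ} (x : Fin N → EuclideanSpace ℝ (Fin p)) (s : Finset (Fin N)) :
    Measure (EuclideanSpace ℝ (Fin p)) :=
  (s.card : ENNReal)⁻¹ • ∑ i ∈ s, Measure.dirac (x i)

/-- `E‖X − Z‖` for independent `X ∼ P`, `Z ∼ Q`. -/
def meanDist {p : ℕ} (P Q : Measure (EuclideanSpace ℝ (Fin p))) : ℝ :=
  ∫ a, ∫ b, ‖a - b‖ ∂Q ∂P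

/-- Energy distance `E(P,Q) = 2E‖X − Z‖ − E‖X − X'‖ − E‖Z − Z'‖`. -/
def energyDist {p : ℕ} (P Q : Measure (EuclideanSpace ℝ (Fin p))) : ℝ :=
  2 * meanDist P Q - meanDist P P - meanDist Q Q

/-- The contiguous circular window (as a set of units) of length `n` starting at position
`j` of the circular sequence `u`. -/
def window (N n : ℕ) [NeZero N] (u : Equiv.Perm (Fin N)) (j : Fin N) : Finset (Fin N) :=
  (Finset.range n).image fun k : ℕ => u (j + (k : Fin N))

/-- The expected energy distance `Ē(u;n) = (1/N) ∑_{j=1}^N E(F_{s_j}, F_U)` of the circular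
design given by the sequence `u`. -/
def expectedED {p : ℕ} (N n : ℕ) [NeZero N] (x : Fin N → EuclideanSpace ℝ (Fin p))
    (u : Equiv.Perm (Fin N)) : ℝ :=
  (1 / N : ℝ) * ∑ j : Fin N, energyDist (empMeasure x (window N n u j)) (empMeasure x Finset.univ)

/-- The aggregated within-window repulsion
`R(u) = ∑_{j=1}^N ∑_{i<k, i,k ∈ s_j} ‖x_{u_i} − x_{u_k}‖`. -/
def aggRepulsion {p : ℕ} (N n : ℕ) [NeZero N] (x : Fin N → EuclideanSpace ℝ (Fin p))
    (u : Equiv.Perm (Fin N)) : ℝ :=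
  ∑ j : Fin N, ∑ a ∈ Finset.range n, ∑ b ∈ Finset.range n,
    (if a < b then ‖x (u (j + (a : Fin N))) - x (u (j + (b : Fin N)))‖ else 0)

/-! Expanding the energy distance of two empirical measures turns every term of `Ē(u;n)` into
sums of pairwise distances. Since every unit lies in exactly `n` of the `N` circular windows,
the window-to-population terms add up to the population mean distance whatever `u` is, and by
symmetry of the distance the within-window terms add up to `2 R(u) / n²`. The comparison of two
designs follows because the coefficient `2 / (N n²)` of `R(u)` is positive. -/

theorem Finset.sum_sum_eq_two_mul_sum_sum_lt {ι R : Type*} [LinearOrder ι] [NonAssocSemiring R]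
    (s : Finset ι) (d : ι → ι → R) (hsymm : ∀ a b, d a b = d b a) (hdiag : ∀ a, d a a = 0) :
    ∑ a ∈ s, ∑ b ∈ s, d a b = 2 * ∑ a ∈ s, ∑ b ∈ s, if a < b then d a b else 0 := by
  have hsplit : ∀ a b, d a b = (if a < b then d a b else 0) + (if b < a then d b a else 0) := by
    intro a b
    rcases lt_trichotomy a b with h | rfl | h
    · simp [h, h.not_gt]
    · simp [hdiag]
    · simp [h, h.not_gt, hsymm a b]
  calc ∑ a ∈ s, ∑ b ∈ s, d a b
      = ∑ a ∈ s, ∑ b ∈ s, (if a < b then d a b else 0)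
          + ∑ a ∈ s, ∑ b ∈ s, (if b < a then d b a else 0) := by
        simp only [← sum_add_distrib, ← hsplit]
    _ = 2 * ∑ a ∈ s, ∑ b ∈ s, if a < b then d a b else 0 := by
        rw [sum_comm (s := s) (t := s) (f := fun a b => if b < a then d b a else 0), two_mul]

section EmpiricalMeasure

variable {p N : ℕ} (x : Fin N → EuclideanSpace ℝ (Fin p))

theorem integral_empMeasure (s : Finset (Fin N)) (f : EuclideanSpace ℝ (Fin p) → ℝ) :
    ∫ a, f a ∂(empMeasure x s) = (#s : ℝ)⁻¹ * ∑ i ∈ s, f (x i) := by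
  rw [empMeasure, integral_smul_measure,
    integral_finsetSum_measure fun i _ => integrable_dirac enorm_lt_top]
  simp [integral_dirac]

theorem meanDist_empMeasure (s t : Finset (Fin N)) :
    meanDist (empMeasure x s) (empMeasure x t) =
      (#s : ℝ)⁻¹ * (#t : ℝ)⁻¹ * ∑ i ∈ s, ∑ k ∈ t, ‖x i - x k‖ := by
  simp only [meanDist, integral_empMeasure, mul_sum, mul_assoc]

end EmpiricalMeasure

section Window

variable {N n : ℕ} [NeZero N]

theorem window_injOn (hnN : n ≤ N) (u : Equiv.Perm (Fin N)) (j : Fin N) :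
    Set.InjOn (fun k : ℕ => u (j + (k : Fin N))) (range n) := by
  intro a ha b hb hab
  have hcast : (a : Fin N) = (b : Fin N) := add_left_cancel (u.injective hab)
  have ha' : a < N := (mem_range.1 ha).trans_le hnN
  have hb' : b < N := (mem_range.1 hb).trans_le hnN
  simpa [Fin.ext_iff, Fin.val_natCast, Nat.mod_eq_of_lt ha', Nat.mod_eq_of_lt hb'] using hcast

theorem card_window (hnN : n ≤ N) (u : Equiv.Perm (Fin N)) (j : Fin N) :
    #(window N n u j) = n := by
  rw [window, card_image_of_injOn (window_injOn hnN u j), card_range]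

theorem sum_window {M : Type*} [AddCommMonoid M] (hnN : n ≤ N) (u : Equiv.Perm (Fin N))
    (j : Fin N) (f : Fin N → M) :
    ∑ i ∈ window N n u j, f i = ∑ a ∈ range n, f (u (j + (a : Fin N))) :=
  sum_image (window_injOn hnN u j)

theorem sum_sum_window_eq {M : Type*} [AddCommMonoid M] (u : Equiv.Perm (Fin N))
    (f : Fin N → M) :
    ∑ j : Fin N, ∑ a ∈ range n, f (u (j + (a : Fin N))) = n • ∑ i : Fin N, f i := by
  calc ∑ j : Fin N, ∑ a ∈ range n, f (u (j + (a : Fin N)))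
      = ∑ a ∈ range n, ∑ j : Fin N, f (u (j + (a : Fin N))) := sum_comm
    _ = ∑ a ∈ range n, ∑ i : Fin N, f i :=
        sum_congr rfl fun a _ => Equiv.sum_comp ((Equiv.addRight (a : Fin N)).trans u) f
    _ = n • ∑ i : Fin N, f i := by rw [sum_const, card_range]

end Window

section Decomposition

variable {p N n : ℕ} [NeZero N] (x : Fin N → EuclideanSpace ℝ (Fin p))

theorem sum_meanDist_window_univ (hnN : n ≤ N) (hn : 0 < n) (u : Equiv.Perm (Fin N)) :
    ∑ j : Fin N, meanDist (empMeasure x (window N n u j)) (empMeasure x univ) =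
      (N : ℝ)⁻¹ * ∑ i : Fin N, ∑ k : Fin N, ‖x i - x k‖ := by
  have hn' : (n : ℝ) ≠ 0 := by exact_mod_cast hn.ne'
  simp only [meanDist_empMeasure, card_window hnN, card_univ, Fintype.card_fin, sum_window hnN,
    ← mul_sum, sum_sum_window_eq u fun i => ∑ k : Fin N, ‖x i - x k‖, nsmul_eq_mul]
  field_simp

theorem sum_meanDist_window_self (hnN : n ≤ N) (u : Equiv.Perm (Fin N)) :
    ∑ j : Fin N, meanDist (empMeasure x (window N n u j)) (empMeasure x (window N n u j)) =
      2 / (n : ℝ) ^ 2 * aggRepulsion N n x u := by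
  simp only [meanDist_empMeasure, card_window hnN, sum_window hnN]
  rw [aggRepulsion, mul_sum]
  refine sum_congr rfl fun j _ => ?_
  rw [sum_sum_eq_two_mul_sum_sum_lt _ _ (fun a b => norm_sub_rev _ _) (fun a => by simp)]
  ring

end Decomposition

/-- The expected energy distance of the circular design decomposes as
`Ē(u;n) = (1/N) ∑_{i∈U} Φ_i − (2/(N n²)) R(u)` with
`Φ_i = (1/N) ∑_{k∈U} ‖x_i − x_k‖`; consequently, minimizing `Ē(u;n)` over permutations `u`
is equivalent to maximizing `R(u)`. -/
theorem expectedED_decomposition {p : ℕ} (N n : ℕ) [NeZero N]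
    (hn : 0 < n) (h2 : 2 * n ≤ N)
    (x : Fin N → EuclideanSpace ℝ (Fin p)) :
    (∀ u : Equiv.Perm (Fin N),
      expectedED N n x u =
        (1 / N : ℝ) * (∑ i : Fin N, (1 / N : ℝ) * ∑ k : Fin N, ‖x i - x k‖)
          - (2 / ((N : ℝ) * (n : ℝ) ^ 2)) * aggRepulsion N n x u) ∧
    (∀ u u' : Equiv.Perm (Fin N),
      expectedED N n x u ≤ expectedED N n x u' ↔
        aggRepulsion N n x u' ≤ aggRepulsion N n x u) := by
  have hnN : n ≤ N := by omega
  have hN : (0 : ℝ) < N := by exact_mod_cast Nat.pos_of_neZero N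
  have decomposition : ∀ u : Equiv.Perm (Fin N), expectedED N n x u =
      (1 / N : ℝ) * (∑ i : Fin N, (1 / N : ℝ) * ∑ k : Fin N, ‖x i - x k‖)
        - (2 / ((N : ℝ) * (n : ℝ) ^ 2)) * aggRepulsion N n x u := by
    intro u
    simp only [expectedED, energyDist, sum_sub_distrib, ← mul_sum]
    rw [sum_meanDist_window_univ x hnN hn, sum_meanDist_window_self x hnN, sum_const, card_univ,
      Fintype.card_fin, nsmul_eq_mul, meanDist_empMeasure, card_univ, Fintype.card_fin]
    field_simp
    ring
  refine ⟨decomposition, fun u u' => ?_⟩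
  have hc : (0 : ℝ) < 2 / ((N : ℝ) * (n : ℝ) ^ 2) := by positivity
  rw [decomposition u, decomposition u', sub_le_sub_iff_left, mul_le_mul_iff_right₀ hc]

end
end
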